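/- For positive integers l ≤ m and n, the number of nonempty subsets X of the interval [l,m] = {l, l+1, ..., m} with gcd(X ∪ {n}) = 1 equals the sum over divisors d of n of μ(d)·2^(⌊m/d⌋ − ⌊(l−1)/d⌋), where the empty-set convention is such that one interprets Φ([l,m],n) counting nonempty subsets (note for n > 1 the term subtracting the empty set vanishes since ∑_{d|n} μ(d) = 0). -/

import Mathlib

/-!
Möbius inversion detects coprimality: `[gcd(a, n) = 1] = ∑_{d ∣ n, d ∣ a} μ(d)`. Summing over all
subsets `X` of the interval and exchanging the sums, `μ(d)` is weighted by the number of subsets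
all of whose elements are multiples of `d`, which is `2 ^ (⌊m/d⌋ - ⌊(l-1)/d⌋)`. For `n > 1` the
empty set is never counted, because `gcd(∅ ∪ {n}) = n`.
-/

open Finset ArithmeticFunction
open scoped ArithmeticFunction.Moebius ArithmeticFunction.zeta

lemma Nat.sum_divisors_moebius (k : ℕ) :
    ∑ d ∈ k.divisors, (μ d : ℤ) = if k = 1 then 1 else 0 := by
  have h : (μ * ζ : ArithmeticFunction ℤ) k = (1 : ArithmeticFunction ℤ) k := by
    rw [moebius_mul_coe_zeta]
  rwa [coe_mul_zeta_apply, one_apply] at h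

lemma Nat.ite_gcd_eq_one_eq_sum_moebius {n : ℕ} (hn : n ≠ 0) (a : ℕ) :
    (if Nat.gcd a n = 1 then (1 : ℤ) else 0) = ∑ d ∈ n.divisors with d ∣ a, (μ d : ℤ) := by
  have hdiv : {d ∈ n.divisors | d ∣ a} = (Nat.gcd a n).divisors := by
    ext d
    simp only [mem_filter, Nat.mem_divisors, Nat.dvd_gcd_iff, ne_eq, Nat.gcd_eq_zero_iff, hn,
      and_false, not_false_eq_true, and_true]
    exact and_comm
  rw [hdiv, Nat.sum_divisors_moebius]

lemma Finset.filter_powerset_forall_mem {α : Type*} (s : Finset α) (p : α → Prop)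
    [DecidablePred p] : {t ∈ s.powerset | ∀ x ∈ t, p x} = {x ∈ s | p x}.powerset := by
  ext t
  simp only [mem_filter, mem_powerset, subset_iff]
  exact ⟨fun ⟨hts, hp⟩ x hx => ⟨hts hx, hp x hx⟩,
    fun h => ⟨fun x hx => (h hx).1, fun x hx => (h hx).2⟩⟩

lemma Nat.card_filter_Ioc_dvd (a b d : ℕ) : #{x ∈ Ioc a b | d ∣ x} = b / d - a / d := by
  rcases le_or_gt a b with hab | hba
  · have hsplit := congrArg (fun s => #{x ∈ s | d ∣ x}) (Ioc_union_Ioc_eq_Ioc (zero_le a) hab)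
    simp only [filter_union] at hsplit
    rw [card_union_of_disjoint (disjoint_filter_filter (Ioc_disjoint_Ioc_of_le le_rfl)),
      Nat.Ioc_filter_dvd_card_eq_div, Nat.Ioc_filter_dvd_card_eq_div] at hsplit
    omega
  · rw [Ioc_eq_empty_of_le hba.le, filter_empty, card_empty,
      Nat.sub_eq_zero_of_le (Nat.div_le_div_right hba.le)]

theorem Nat.card_filter_powerset_gcd_eq_one (s : Finset ℕ) {n : ℕ} (hn : n ≠ 0) :
    (#{X ∈ s.powerset | Nat.gcd (X.gcd id) n = 1} : ℤ) =
      ∑ d ∈ n.divisors, μ d * 2 ^ #{x ∈ s | d ∣ x} := by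
  calc (#{X ∈ s.powerset | Nat.gcd (X.gcd id) n = 1} : ℤ)
      = ∑ X ∈ s.powerset, if Nat.gcd (X.gcd id) n = 1 then (1 : ℤ) else 0 := by
        rw [sum_boole]
    _ = ∑ X ∈ s.powerset, ∑ d ∈ n.divisors with d ∣ X.gcd id, (μ d : ℤ) :=
        sum_congr rfl fun X _ => Nat.ite_gcd_eq_one_eq_sum_moebius hn _
    _ = ∑ d ∈ n.divisors, ∑ X ∈ s.powerset with d ∣ X.gcd id, (μ d : ℤ) := by
        simp only [sum_filter]
        exact sum_comm
    _ = ∑ d ∈ n.divisors, μ d * 2 ^ #{x ∈ s | d ∣ x} := by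
        refine sum_congr rfl fun d _ => ?_
        simp only [Finset.dvd_gcd_iff, id_eq, filter_powerset_forall_mem, sum_const,
          card_powerset, nsmul_eq_mul, Nat.cast_pow, Nat.cast_ofNat, mul_comm]

theorem stmt5_general (l m n : ℕ) (hl : 0 < l) (hn : 1 < n) :
    ((((Finset.Icc l m).powerset.filter
        (fun X => X.Nonempty ∧ Nat.gcd (X.gcd id) n = 1)).card : ℤ)) =
      ∑ d ∈ n.divisors, (ArithmeticFunction.moebius d) * 2 ^ (m / d - (l - 1) / d) := by
  have hIcc : Finset.Icc l m = Ioc (l - 1) m := by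
    ext x
    simp only [mem_Icc, mem_Ioc]
    omega
  have hnonempty : ∀ X : Finset ℕ, Nat.gcd (X.gcd id) n = 1 → X.Nonempty := by
    rintro X hX
    rw [nonempty_iff_ne_empty]
    rintro rfl
    simp only [gcd_empty, Nat.gcd_zero_left] at hX
    omega
  rw [filter_congr fun X _ => and_iff_right_of_imp (hnonempty X),
    Nat.card_filter_powerset_gcd_eq_one _ (by omega), hIcc]
  simp only [Nat.card_filter_Ioc_dvd]

theorem stmt5 (l m n : ℕ) (hl : 0 < l) (hlm : l ≤ m) (hn : 1 < n) :
    ((((Finset.Icc l m).powerset.filter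
        (fun X => X.Nonempty ∧ Nat.gcd (X.gcd id) n = 1)).card : ℤ)) =
      ∑ d ∈ n.divisors, (ArithmeticFunction.moebius d) * 2 ^ (m / d - (l - 1) / d) :=
  stmt5_general l m n hl hn
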